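/- arXiv:1502.01287 — 4 statements merged into one kernel-verified Lean document; each statement's English description precedes it below -/
import Mathlib

section
/- The noncommuting graph of a finite nonabelian group is connected and has diameter at most 2. -/
open scoped Classical

/-- The noncommuting graph of a group `G`: vertices are the noncentral elements,
two vertices are adjacent when they do not commute. -/
def ncGraph (G : Type*) [Group G] : SimpleGraph {x : G // x ∉ Subgroup.center G} where
  Adj x y := (x : G) * y ≠ (y : G) * x
  symm := ⟨fun x y h he => h he.symm⟩
  loopless := ⟨fun x h => h rfl⟩

/-!
A group is never the union of two proper subgroups, so the centralizers of two noncentral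
elements `x`, `y` do not cover `G`; any element outside both is a common neighbour of `x` and `y`.
-/

namespace Subgroup

variable {G : Type*} [Group G]

lemma notMem_center_of_not_commute {a b : G} (hab : ¬Commute a b) : a ∉ center G :=
  fun ha => hab (mem_center_iff.mp ha b).symm

lemma exists_not_commute_not_commute_of_notMem_center {x y : G} (hx : x ∉ center G)
    (hy : y ∉ center G) : ∃ z : G, ¬Commute z x ∧ ¬Commute z y := by
  by_contra! hboth
  have hcover : ((⊤ : Subgroup G) : Set G) ⊆ centralizer {x} ∪ centralizer {y} :=
    fun z _ => (em (Commute z x)).imp mem_centralizer_singleton_iff.mpr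
      fun hzx => mem_centralizer_singleton_iff.mpr (hboth z hzx)
  rcases SubgroupClass.subset_union.mp hcover with hx' | hy'
  · exact hx (centralizer_eq_top_iff_subset.mp (top_le_iff.mp hx') rfl)
  · exact hy (centralizer_eq_top_iff_subset.mp (top_le_iff.mp hy') rfl)

end Subgroup

namespace ncGraph

variable {G : Type*} [Group G]

lemma exists_walk_length_le_two (x y : {x : G // x ∉ Subgroup.center G}) :
    ∃ p : (ncGraph G).Walk x y, p.length ≤ 2 := by
  by_cases hxy : Commute (x : G) y
  · obtain ⟨z, hzx, hzy⟩ :=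
      Subgroup.exists_not_commute_not_commute_of_notMem_center x.2 y.2
    have hxz : (ncGraph G).Adj x ⟨z, Subgroup.notMem_center_of_not_commute hzx⟩ :=
      fun h => hzx h.symm
    have hzy : (ncGraph G).Adj ⟨z, Subgroup.notMem_center_of_not_commute hzx⟩ y := hzy
    exact ⟨.cons hxz (.cons hzy .nil), le_rfl⟩
  · exact ⟨(show (ncGraph G).Adj x y from hxy).toWalk, by simp⟩

lemma dist_le_two (x y : {x : G // x ∉ Subgroup.center G}) : (ncGraph G).dist x y ≤ 2 :=
  let ⟨p, hp⟩ := exists_walk_length_le_two x y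
  (SimpleGraph.dist_le p).trans hp

lemma preconnected : (ncGraph G).Preconnected := fun x y =>
  let ⟨p, _⟩ := exists_walk_length_le_two x y
  p.reachable

end ncGraph

theorem stmt1_general {G : Type*} [Group G]
    (hG : ∃ a b : G, a * b ≠ b * a) :
    (ncGraph G).Connected ∧
      ∀ x y : {x : G // x ∉ Subgroup.center G}, (ncGraph G).dist x y ≤ 2 := by
  obtain ⟨a, b, hab⟩ := hG
  have : Nonempty {x : G // x ∉ Subgroup.center G} :=
    ⟨⟨a, Subgroup.notMem_center_of_not_commute hab⟩⟩
  exact ⟨⟨ncGraph.preconnected⟩, ncGraph.dist_le_two⟩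

theorem stmt1 {G : Type*} [Group G] [Fintype G]
    (hG : ∃ a b : G, a * b ≠ b * a) :
    (ncGraph G).Connected ∧
      ∀ x y : {x : G // x ∉ Subgroup.center G}, (ncGraph G).dist x y ≤ 2 :=
  stmt1_general hG
end

section
/- Nash implies Sobolev on weighted graphs: let n > 2, p = 2n/(n−2), and suppose for all finitely supported f : V → ℝ the Nash inequality (Σ_x |f(x)|² μ_x)^{1+2/n} ≤ B · (Σ_{x∼y} |f(y)−f(x)|² σ_{xy}) · (Σ_x |f(x)| μ_x)^{4/n} holds. Then for all finitely supported f, (Σ_x |f(x)|^p μ_x)^{2/p} ≤ (2^p − 1)^{2/p} · 2^{2(p−1)} · B · Σ_{x∼y} |f(y)−f(x)|² σ_{xy}. -/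
/-!
Slicing argument of Bakry–Coulhon–Ledoux–Saloff-Coste. Cut `|f|` into the dyadic slices
`φₖ = min |f| 2^(k+1) - min |f| 2^k` and let `bₖ` be the `μ`-mass of `{|f| ≥ 2^k}`. Since
`φₖ = 2^k` on `{|f| ≥ 2^(k+1)}` and `0 ≤ φₖ ≤ 2^k · 1_{|f| ≥ 2^k}`, the Nash inequality for `φₖ`
reads `(4^k b_(k+1))^(1+2/n) ≤ B E(φₖ) (2^k bₖ)^(4/n)`, that is, for `cₖ = 2^(pk) bₖ`,
`c_(k+1) ≤ 2^p (B E(φₖ))^(n/(n+2)) cₖ^(4/(n+2))`.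
Summing over `k ∈ ℤ`, Hölder with exponents `(n+2)/n` and `(n+2)/2`, `∑ cₖ² ≤ (∑ cₖ)²` and
`∑ E(φₖ) ≤ E(f)` give `S ≤ 2^p (B E(f))^(n/(n+2)) S^(4/(n+2))` for `S = ∑ cₖ < ∞`, whence
`S^(2/p) ≤ 2^(2(p-1)) B E(f)`. Finally `∑ |f|^p μ ≤ (2^p - 1) S` is a dyadic layer-cake estimate.
-/

open scoped Classical
open scoped ENNReal
open Finset

noncomputable def dyadicSlice (k : ℤ) (t : ℝ) : ℝ := min t (2 ^ (k + 1)) - min t (2 ^ k)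

section DyadicSlice

variable {k : ℤ} {s t : ℝ}

lemma two_zpow_le_two_zpow_succ (k : ℤ) : (2 : ℝ) ^ k ≤ 2 ^ (k + 1) :=
  zpow_le_zpow_right₀ one_le_two (Int.le_add_one le_rfl)

lemma dyadicSlice_of_le (h : t ≤ 2 ^ k) : dyadicSlice k t = 0 := by
  rw [dyadicSlice, min_eq_left h, min_eq_left (h.trans (two_zpow_le_two_zpow_succ k)), sub_self]

lemma dyadicSlice_of_two_zpow_succ_le (h : 2 ^ (k + 1) ≤ t) : dyadicSlice k t = 2 ^ k := by
  rw [dyadicSlice, min_eq_right h, min_eq_right ((two_zpow_le_two_zpow_succ k).trans h),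
    zpow_add_one₀ two_ne_zero]
  ring

lemma dyadicSlice_zero (k : ℤ) : dyadicSlice k 0 = 0 :=
  dyadicSlice_of_le (zpow_nonneg zero_le_two k)

lemma dyadicSlice_nonneg (k : ℤ) (t : ℝ) : 0 ≤ dyadicSlice k t :=
  sub_nonneg.2 (min_le_min_left t (two_zpow_le_two_zpow_succ k))

lemma dyadicSlice_le (k : ℤ) (t : ℝ) : dyadicSlice k t ≤ 2 ^ k := by
  rcases le_total t (2 ^ k) with h | h
  · rw [dyadicSlice_of_le h]
    positivity
  · rw [dyadicSlice, min_eq_right h, zpow_add_one₀ two_ne_zero]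
    linarith [min_le_right t ((2 : ℝ) ^ k * 2)]

lemma monotone_min_sub_min (hts : t ≤ s) : Monotone fun c : ℝ ↦ min s c - min t c := by
  intro c c' hc
  simp only
  rcases min_cases s c with h₁ | h₁ <;> rcases min_cases t c with h₂ | h₂ <;>
    rcases min_cases s c' with h₃ | h₃ <;> rcases min_cases t c' with h₄ | h₄ <;> linarith

lemma dyadicSlice_sub_nonneg (hts : t ≤ s) (k : ℤ) : 0 ≤ dyadicSlice k s - dyadicSlice k t := by
  have := monotone_min_sub_min hts (two_zpow_le_two_zpow_succ k)
  simp only at this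
  rw [dyadicSlice, dyadicSlice]
  linarith

lemma sum_Ico_sub_int (F : ℤ → ℝ) {a b : ℤ} (hab : a ≤ b) :
    ∑ k ∈ Ico a b, (F (k + 1) - F k) = F b - F a := by
  induction b, hab using Int.leInduction with
  | base => simp
  | succ b hab ih =>
    rw [← insert_Ico_right_eq_Ico_add_one hab, sum_insert (by simp), ih]
    ring

/-- The slices of `s` and `t` differ on disjoint dyadic intervals, so their differences add up to
at most `s - t`. -/
lemma sum_dyadicSlice_sub_le (hts : t ≤ s) (G : Finset ℤ) :
    ∑ k ∈ G, (dyadicSlice k s - dyadicSlice k t) ≤ s - t := by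
  rcases G.eq_empty_or_nonempty with rfl | hG
  · simpa using hts
  set F : ℤ → ℝ := fun k ↦ min s (2 ^ k) - min t (2 ^ k)
  have hF : ∀ k, dyadicSlice k s - dyadicSlice k t = F (k + 1) - F k := fun k ↦ by
    simp only [F, dyadicSlice]; ring
  have hGsub : G ⊆ Ico (G.min' hG) (G.max' hG + 1) := fun k hk ↦
    mem_Ico.2 ⟨G.min'_le k hk, Int.lt_add_one_iff.2 (G.le_max' k hk)⟩
  calc ∑ k ∈ G, (dyadicSlice k s - dyadicSlice k t)
      ≤ ∑ k ∈ Ico (G.min' hG) (G.max' hG + 1), (dyadicSlice k s - dyadicSlice k t) :=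
        sum_le_sum_of_subset_of_nonneg hGsub fun k _ _ ↦ dyadicSlice_sub_nonneg hts k
    _ = F (G.max' hG + 1) - F (G.min' hG) := by
        simp only [hF]
        exact sum_Ico_sub_int F (by linarith [G.min'_le_max' hG])
    _ ≤ s - t := by
        have hmax : min s (2 ^ (G.max' hG + 1)) - min t (2 ^ (G.max' hG + 1)) ≤ s - t := by
          rcases min_cases s ((2 : ℝ) ^ (G.max' hG + 1)) with h | h <;>
            rcases min_cases t ((2 : ℝ) ^ (G.max' hG + 1)) with h' | h' <;> linarith
        have hmin : min t (2 ^ G.min' hG) ≤ min s (2 ^ G.min' hG) := min_le_min_right _ hts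
        simp only [F]
        linarith

lemma sum_sq_dyadicSlice_sub_le (s t : ℝ) (G : Finset ℤ) :
    ∑ k ∈ G, (dyadicSlice k s - dyadicSlice k t) ^ 2 ≤ (s - t) ^ 2 := by
  wlog hts : t ≤ s generalizing s t
  · simpa only [← neg_sub s t, ← neg_sub (dyadicSlice _ s), neg_sq] using
      this t s (le_of_not_ge hts)
  calc ∑ k ∈ G, (dyadicSlice k s - dyadicSlice k t) ^ 2
      ≤ (∑ k ∈ G, (dyadicSlice k s - dyadicSlice k t)) ^ 2 :=
        sum_sq_le_sq_sum_of_nonneg fun k _ ↦ dyadicSlice_sub_nonneg hts k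
    _ ≤ (s - t) ^ 2 :=
        pow_le_pow_left₀ (sum_nonneg fun k _ ↦ dyadicSlice_sub_nonneg hts k)
          (sum_dyadicSlice_sub_le hts G) 2

lemma tsum_ofReal_sq_dyadicSlice_sub_le (s t : ℝ) :
    ∑' k, ENNReal.ofReal ((dyadicSlice k s - dyadicSlice k t) ^ 2) ≤ ENNReal.ofReal ((s - t) ^ 2) :=
  tsum_le_of_sum_le' zero_le fun G ↦ by
    rw [← ENNReal.ofReal_sum_of_nonneg fun k _ ↦ sq_nonneg _]
    exact ENNReal.ofReal_le_ofReal (sum_sq_dyadicSlice_sub_le s t G)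

end DyadicSlice

namespace ENNReal

lemma tsum_rpow_mul_rpow_le {ι : Type*} (f g : ι → ℝ≥0∞) {a b : ℝ} (ha : 0 ≤ a) (hb : 0 ≤ b)
    (hab : a + b = 1) : ∑' i, f i ^ a * g i ^ b ≤ (∑' i, f i) ^ a * (∑' i, g i) ^ b := by
  let _ : MeasurableSpace ι := ⊤
  have hmeas : ∀ φ : ι → ℝ≥0∞, AEMeasurable φ .count := fun φ ↦ (measurable_from_top).aemeasurable
  simpa only [MeasureTheory.lintegral_count] using
    lintegral_mul_norm_pow_le (hmeas f) (hmeas g) ha hb hab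

lemma tsum_sq_le_sq_tsum {ι : Type*} (f : ι → ℝ≥0∞) : ∑' i, f i ^ 2 ≤ (∑' i, f i) ^ 2 := by
  simp only [sq]
  calc ∑' i, f i * f i ≤ ∑' i, f i * ∑' j, f j := by gcongr with i; exact ENNReal.le_tsum i
    _ = (∑' i, f i) * ∑' j, f j := ENNReal.tsum_mul_right

/-- Shifting the index and applying Hölder with exponents `a` and `b / 2` to the recursion. -/
lemma tsum_le_of_le_mul_rpow_mul_rpow {a b : ℝ} (ha : 0 ≤ a) (hb : 0 ≤ b) (hab : a + b / 2 = 1)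
    {c e : ℤ → ℝ≥0∞} {C : ℝ≥0∞} (h : ∀ k, c (k + 1) ≤ C * e k ^ a * c k ^ b) :
    ∑' k, c k ≤ C * (∑' k, e k) ^ a * (∑' k, c k) ^ b := by
  have hsq : ∀ x : ℝ≥0∞, x ^ b = (x ^ 2) ^ (b / 2) := fun x ↦ by
    rw [← ENNReal.rpow_natCast, ← ENNReal.rpow_mul]; ring_nf
  calc ∑' k, c k = ∑' k, c (k + 1) := ((Equiv.addRight 1).tsum_eq c).symm
    _ ≤ ∑' k, C * (e k ^ a * (c k ^ 2) ^ (b / 2)) := by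
        gcongr with k; rw [← hsq, ← mul_assoc]; exact h k
    _ ≤ C * ((∑' k, e k) ^ a * (∑' k, c k ^ 2) ^ (b / 2)) := by
        rw [ENNReal.tsum_mul_left]
        gcongr
        exact tsum_rpow_mul_rpow_le _ _ ha (by positivity) hab
    _ ≤ C * (∑' k, e k) ^ a * (∑' k, c k) ^ b := by
        rw [hsq (∑' k, c k), mul_assoc]
        gcongr
        exact tsum_sq_le_sq_tsum c

lemma rpow_one_sub_le_of_le_mul_rpow {S K : ℝ≥0∞} {a : ℝ} (ha : a < 1) (hS : S ≠ ⊤)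
    (h : S ≤ K * S ^ a) : S ^ (1 - a) ≤ K := by
  rcases eq_or_ne S 0 with rfl | hS₀
  · simp [ENNReal.zero_rpow_of_pos (sub_pos.2 ha)]
  have hSa₀ : S ^ a ≠ 0 := by simp [hS₀, hS]
  have hSa : S ^ a ≠ ⊤ := by simp [hS₀, hS]
  rw [← ENNReal.mul_le_mul_iff_left hSa₀ hSa, ← ENNReal.rpow_add _ _ hS₀ hS, sub_add_cancel,
    ENNReal.rpow_one]
  exact h

lemma tsum_ite_le_zpow {q : ℝ} (hq : 1 < q) (m : ℤ) :
    ∑' k : ℤ, (if k ≤ m then ENNReal.ofReal (q ^ k) else 0) =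
      ENNReal.ofReal (q ^ (m + 1) / (q - 1)) := by
  have hq₀ : 0 < q := zero_lt_one.trans hq
  have hinj : Function.Injective fun i : ℕ ↦ m - i := fun i j hij ↦ by simpa using hij
  have hsupp : (Function.support fun k : ℤ ↦ if k ≤ m then ENNReal.ofReal (q ^ k) else 0) ⊆
      Set.range fun i : ℕ ↦ m - i := fun k hk ↦
    ⟨(m - k).toNat, by
      have : k ≤ m := by by_contra h; simp [h] at hk
      simp [Int.toNat_of_nonneg (sub_nonneg.2 this)]⟩
  have hterm : ∀ i : ℕ, q ^ (m - i) = q ^ m * q⁻¹ ^ i := fun i ↦ by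
    rw [zpow_sub₀ hq₀.ne', zpow_natCast, div_eq_mul_inv, inv_pow]
  have hr : q⁻¹ < 1 := inv_lt_one_of_one_lt₀ hq
  rw [← hinj.tsum_eq hsupp]
  simp only [sub_le_self_iff, Nat.cast_nonneg, if_true, hterm]
  rw [← ENNReal.ofReal_tsum_of_nonneg (fun i ↦ by positivity)
    ((summable_geometric_of_lt_one (by positivity) hr).mul_left _), tsum_mul_left,
    tsum_geometric_of_lt_one (by positivity) hr, zpow_add_one₀ hq₀.ne']
  congr 1
  field_simp

end ENNReal

lemma rpow_le_rpow_mul_of_ofReal_le_mul {X a r C : ℝ} {S : ℝ≥0∞} (hX : 0 ≤ X) (ha : 0 ≤ a)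
    (hr : 0 ≤ r) (hC : 0 ≤ C) (hXS : ENNReal.ofReal X ≤ ENNReal.ofReal a * S)
    (hS : S ^ r ≤ ENNReal.ofReal C) : X ^ r ≤ a ^ r * C := by
  rw [← ENNReal.ofReal_le_ofReal_iff (mul_nonneg (Real.rpow_nonneg ha r) hC),
    ← ENNReal.ofReal_rpow_of_nonneg hX hr]
  calc ENNReal.ofReal X ^ r ≤ (ENNReal.ofReal a * S) ^ r := by gcongr
    _ = ENNReal.ofReal a ^ r * S ^ r := ENNReal.mul_rpow_of_nonneg _ _ hr
    _ ≤ ENNReal.ofReal a ^ r * ENNReal.ofReal C := by gcongr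
    _ = ENNReal.ofReal (a ^ r * C) := by
        rw [ENNReal.ofReal_rpow_of_nonneg ha hr, ENNReal.ofReal_mul (Real.rpow_nonneg ha r)]

lemma two_zpow_rpow (k : ℤ) (p : ℝ) : ((2 : ℝ) ^ k) ^ p = ((2 : ℝ) ^ p) ^ k := by
  rw [← Real.rpow_intCast_mul zero_le_two, mul_comm, Real.rpow_mul_intCast zero_le_two]

lemma one_lt_two_rpow {p : ℝ} (hp : 0 < p) : 1 < (2 : ℝ) ^ p := Real.one_lt_rpow one_lt_two hp

lemma tsum_ite_two_zpow_le {p t : ℝ} (hp : 0 < p) (ht : 0 < t) :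
    ∑' k : ℤ, (if (2 : ℝ) ^ k ≤ t then ENNReal.ofReal (((2 : ℝ) ^ p) ^ k) else 0) =
      ENNReal.ofReal (((2 : ℝ) ^ p) ^ (Int.log 2 t + 1) / (2 ^ p - 1)) := by
  have hlog : ∀ k : ℤ, (2 : ℝ) ^ k ≤ t ↔ k ≤ Int.log 2 t := fun k ↦ by
    exact_mod_cast Int.zpow_le_iff_le_log (b := 2) one_lt_two ht
  simp only [hlog]
  exact ENNReal.tsum_ite_le_zpow (one_lt_two_rpow hp) _

lemma rpow_le_two_rpow_zpow_log_add_one {p t : ℝ} (hp : 0 < p) (ht : 0 < t) :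
    t ^ p ≤ ((2 : ℝ) ^ p) ^ (Int.log 2 t + 1) := by
  rw [← two_zpow_rpow]
  gcongr
  exact_mod_cast (Int.lt_zpow_succ_log_self (b := 2) one_lt_two t).le

section DyadicMass

variable {V : Type*} {μ g : V → ℝ} {T : Finset V}

noncomputable def dyadicMass (μ g : V → ℝ) (T : Finset V) (k : ℤ) : ℝ :=
  ∑ x ∈ T with (2 : ℝ) ^ k ≤ g x, μ x

lemma dyadicMass_nonneg (hμ : ∀ x, 0 ≤ μ x) (k : ℤ) : 0 ≤ dyadicMass μ g T k :=
  sum_nonneg fun x _ ↦ hμ x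

lemma sq_mul_dyadicMass_succ_le (hμ : ∀ x, 0 ≤ μ x) (k : ℤ) :
    ((2 : ℝ) ^ k) ^ 2 * dyadicMass μ g T (k + 1) ≤ ∑ x ∈ T, dyadicSlice k (g x) ^ 2 * μ x := by
  rw [dyadicMass, mul_sum]
  calc ∑ x ∈ T with 2 ^ (k + 1) ≤ g x, ((2 : ℝ) ^ k) ^ 2 * μ x
      = ∑ x ∈ T with 2 ^ (k + 1) ≤ g x, dyadicSlice k (g x) ^ 2 * μ x :=
        sum_congr rfl fun x hx ↦ by rw [dyadicSlice_of_two_zpow_succ_le (mem_filter.1 hx).2]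
    _ ≤ ∑ x ∈ T, dyadicSlice k (g x) ^ 2 * μ x :=
        sum_le_sum_of_subset_of_nonneg (filter_subset _ _) fun x _ _ ↦
          mul_nonneg (sq_nonneg _) (hμ x)

lemma sum_dyadicSlice_mul_le (hμ : ∀ x, 0 ≤ μ x) (k : ℤ) :
    ∑ x ∈ T, dyadicSlice k (g x) * μ x ≤ 2 ^ k * dyadicMass μ g T k := by
  rw [dyadicMass, mul_sum, sum_filter]
  refine sum_le_sum fun x _ ↦ ?_
  split_ifs with h
  · exact mul_le_mul_of_nonneg_right (dyadicSlice_le k (g x)) (hμ x)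
  · rw [dyadicSlice_of_le (not_le.1 h).le, zero_mul]

lemma tsum_zpow_mul_dyadicMass {p : ℝ} (hp : 0 < p) (hμ : ∀ x, 0 ≤ μ x)
    (hg : ∀ x ∈ T, 0 < g x) :
    ∑' k : ℤ, ENNReal.ofReal (((2 : ℝ) ^ p) ^ k * dyadicMass μ g T k) =
      ∑ x ∈ T, ENNReal.ofReal (μ x * (((2 : ℝ) ^ p) ^ (Int.log 2 (g x) + 1) / (2 ^ p - 1))) := by
  have hq₀ : 0 < (2 : ℝ) ^ p := by positivity
  have hterm : ∀ k : ℤ, ENNReal.ofReal (((2 : ℝ) ^ p) ^ k * dyadicMass μ g T k) =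
      ∑ x ∈ T, ENNReal.ofReal (μ x) *
        (if (2 : ℝ) ^ k ≤ g x then ENNReal.ofReal (((2 : ℝ) ^ p) ^ k) else 0) := fun k ↦ by
    rw [dyadicMass, sum_filter, mul_sum, ENNReal.ofReal_sum_of_nonneg fun x _ ↦ by
      split_ifs <;> positivity [hμ x]]
    refine sum_congr rfl fun x _ ↦ ?_
    split_ifs
    · rw [mul_comm, ENNReal.ofReal_mul (hμ x)]
    · simp
  rw [tsum_congr hterm, Summable.tsum_finsetSum fun _ _ ↦ ENNReal.summable]
  refine sum_congr rfl fun x hx ↦ ?_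
  rw [ENNReal.tsum_mul_left, tsum_ite_two_zpow_le hp (hg x hx), ← ENNReal.ofReal_mul (hμ x)]

lemma tsum_zpow_mul_dyadicMass_ne_top {p : ℝ} (hp : 0 < p) (hμ : ∀ x, 0 ≤ μ x)
    (hg : ∀ x ∈ T, 0 < g x) :
    ∑' k : ℤ, ENNReal.ofReal (((2 : ℝ) ^ p) ^ k * dyadicMass μ g T k) ≠ ⊤ :=
  (tsum_zpow_mul_dyadicMass hp hμ hg).trans_ne
    (ENNReal.sum_ne_top.2 fun _ _ ↦ ENNReal.ofReal_ne_top)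

/-- Dyadic layer-cake bound: `g x ^ p ≤ (2 ^ p - 1) ∑_{2 ^ k ≤ g x} (2 ^ p) ^ k`. -/
lemma ofReal_sum_rpow_mul_le_tsum {p : ℝ} (hp : 0 < p) (hμ : ∀ x, 0 ≤ μ x)
    (hg : ∀ x ∈ T, 0 < g x) :
    ENNReal.ofReal (∑ x ∈ T, g x ^ p * μ x) ≤
      ENNReal.ofReal (2 ^ p - 1) *
        ∑' k : ℤ, ENNReal.ofReal (((2 : ℝ) ^ p) ^ k * dyadicMass μ g T k) := by
  have hq : 0 < (2 : ℝ) ^ p - 1 := sub_pos.2 (one_lt_two_rpow hp)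
  rw [tsum_zpow_mul_dyadicMass hp hμ hg, mul_sum,
    ENNReal.ofReal_sum_of_nonneg fun x hx ↦ mul_nonneg (Real.rpow_nonneg (hg x hx).le p) (hμ x)]
  refine sum_le_sum fun x hx ↦ ?_
  rw [← ENNReal.ofReal_mul hq.le]
  refine ENNReal.ofReal_le_ofReal ?_
  rw [mul_comm (μ x), ← mul_assoc, mul_div_cancel₀ _ hq.ne']
  exact mul_le_mul_of_nonneg_right (rpow_le_two_rpow_zpow_log_add_one hp (hg x hx)) (hμ x)

end DyadicMass

lemma rpow_mul_le_of_nash_step {n p : ℝ} (hn : 2 < n) (hp : p = 2 * n / (n - 2))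
    {u b b' E : ℝ} (hu : 0 < u) (hb : 0 ≤ b) (hb' : 0 ≤ b') (hE : 0 ≤ E)
    (h : (u ^ 2 * b') ^ (1 + 2 / n) ≤ E * (u * b) ^ (4 / n)) :
    u ^ p * b' ≤ E ^ (n / (n + 2)) * (u ^ p * b) ^ (4 / (n + 2)) := by
  have hn₀ : 0 < n := by linarith
  have hn₂ : n - 2 ≠ 0 := by linarith
  have hstep : u ^ 2 * b' ≤ E ^ (n / (n + 2)) * (u * b) ^ (4 / (n + 2)) := by
    have := Real.rpow_le_rpow (by positivity) h (by positivity : 0 ≤ n / (n + 2))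
    rwa [← Real.rpow_mul (by positivity), Real.mul_rpow hE (by positivity),
      ← Real.rpow_mul (by positivity),
      show (1 + 2 / n) * (n / (n + 2)) = 1 by field_simp,
      show 4 / n * (n / (n + 2)) = 4 / (n + 2) by field_simp, Real.rpow_one] at this
  have hexp : p - 2 + 4 / (n + 2) = p * (4 / (n + 2)) := by
    subst hp; field_simp; ring
  calc u ^ p * b' = u ^ (p - 2) * (u ^ 2 * b') := by
        rw [← mul_assoc, ← Real.rpow_natCast, ← Real.rpow_add hu]; norm_num
    _ ≤ u ^ (p - 2) * (E ^ (n / (n + 2)) * (u * b) ^ (4 / (n + 2))) := by gcongr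
    _ = E ^ (n / (n + 2)) * (u ^ p * b) ^ (4 / (n + 2)) := by
        rw [Real.mul_rpow hu.le hb, Real.mul_rpow (by positivity) hb, ← Real.rpow_mul hu.le, ← hexp,
          Real.rpow_add hu]
        ring

lemma ofReal_zpow_mul_succ_le_of_nash_step {n p : ℝ} (hn : 2 < n) (hp : p = 2 * n / (n - 2))
    {b : ℤ → ℝ} (hb : ∀ k, 0 ≤ b k) {E : ℝ} (hE : 0 ≤ E) {k : ℤ}
    (h : (((2 : ℝ) ^ k) ^ 2 * b (k + 1)) ^ (1 + 2 / n) ≤ E * (2 ^ k * b k) ^ (4 / n)) :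
    ENNReal.ofReal (((2 : ℝ) ^ p) ^ (k + 1) * b (k + 1)) ≤
      ENNReal.ofReal (2 ^ p) * ENNReal.ofReal E ^ (n / (n + 2)) *
        ENNReal.ofReal (((2 : ℝ) ^ p) ^ k * b k) ^ (4 / (n + 2)) := by
  have hk := rpow_mul_le_of_nash_step hn hp (zpow_pos two_pos k) (hb k) (hb (k + 1)) hE h
  rw [two_zpow_rpow] at hk
  rw [ENNReal.ofReal_rpow_of_nonneg hE (by positivity),
    ENNReal.ofReal_rpow_of_nonneg (mul_nonneg (by positivity) (hb k)) (by positivity),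
    ← ENNReal.ofReal_mul (by positivity), ← ENNReal.ofReal_mul (by positivity),
    zpow_add_one₀ (by positivity)]
  refine ENNReal.ofReal_le_ofReal ?_
  calc ((2 : ℝ) ^ p) ^ k * 2 ^ p * b (k + 1) = 2 ^ p * (((2 : ℝ) ^ p) ^ k * b (k + 1)) := by ring
    _ ≤ 2 ^ p * (E ^ (n / (n + 2)) * (((2 : ℝ) ^ p) ^ k * b k) ^ (4 / (n + 2))) := by gcongr
    _ = _ := by ring

lemma tsum_rpow_le_of_dyadic_nash {n p : ℝ} (hn : 2 < n) (hp : p = 2 * n / (n - 2))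
    {b E : ℤ → ℝ} (hb : ∀ k, 0 ≤ b k) (hE : ∀ k, 0 ≤ E k)
    (h : ∀ k : ℤ, (((2 : ℝ) ^ k) ^ 2 * b (k + 1)) ^ (1 + 2 / n) ≤ E k * (2 ^ k * b k) ^ (4 / n))
    (hS : ∑' k : ℤ, ENNReal.ofReal (((2 : ℝ) ^ p) ^ k * b k) ≠ ⊤) :
    (∑' k : ℤ, ENNReal.ofReal (((2 : ℝ) ^ p) ^ k * b k)) ^ (2 / p) ≤
      ENNReal.ofReal (2 ^ (2 * (p - 1))) * ∑' k, ENNReal.ofReal (E k) := by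
  have hn₀ : 0 < n := by linarith
  have hn₂ : n - 2 ≠ 0 := by linarith
  set S := ∑' k : ℤ, ENNReal.ofReal (((2 : ℝ) ^ p) ^ k * b k)
  have hsum := ENNReal.tsum_le_of_le_mul_rpow_mul_rpow (by positivity) (by positivity)
    (by field_simp; ring) fun k ↦ ofReal_zpow_mul_succ_le_of_nash_step hn hp hb (hE k) (h k)
  have habs := ENNReal.rpow_one_sub_le_of_le_mul_rpow
    (by rw [div_lt_one (by positivity)]; linarith) hS hsum
  calc S ^ (2 / p) = (S ^ (1 - 4 / (n + 2))) ^ ((n + 2) / n) := by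
        rw [← ENNReal.rpow_mul]; congr 1; subst hp; field_simp; ring
    _ ≤ (ENNReal.ofReal (2 ^ p) * (∑' k, ENNReal.ofReal (E k)) ^ (n / (n + 2))) ^
          ((n + 2) / n) := by
        gcongr
    _ = ENNReal.ofReal (2 ^ (2 * (p - 1))) * ∑' k, ENNReal.ofReal (E k) := by
        rw [ENNReal.mul_rpow_of_nonneg _ _ (by positivity), ← ENNReal.rpow_mul,
          ENNReal.ofReal_rpow_of_nonneg (by positivity) (by positivity),
          ← Real.rpow_mul zero_le_two, show n / (n + 2) * ((n + 2) / n) = 1 by field_simp,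
          ENNReal.rpow_one, show p * ((n + 2) / n) = 2 * (p - 1) by subst hp; field_simp; ring]

section Graph

variable {V : Type*} (Γ : SimpleGraph V) [∀ v, Fintype (Γ.neighborSet v)]

noncomputable def dirichletEnergy (σ : V → V → ℝ) (f : V → ℝ) : ℝ :=
  ∑ᶠ x, ∑ y ∈ Γ.neighborFinset x, (f y - f x) ^ 2 * σ x y

def NashInequality (σ : V → V → ℝ) (μ : V → ℝ) (n B : ℝ) : Prop :=
  ∀ f : V → ℝ, (Function.support f).Finite →
    (∑ᶠ x, |f x| ^ (2 : ℝ) * μ x) ^ (1 + 2 / n) ≤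
      B * dirichletEnergy Γ σ f * (∑ᶠ x, |f x| * μ x) ^ (4 / n)

variable {Γ} {σ : V → V → ℝ}

lemma dirichletEnergy_nonneg (hσ : ∀ x y, Γ.Adj x y → 0 ≤ σ x y) (f : V → ℝ) :
    0 ≤ dirichletEnergy Γ σ f :=
  finsum_nonneg fun x ↦ sum_nonneg fun y hy ↦
    mul_nonneg (sq_nonneg _) (hσ x y ((Γ.mem_neighborFinset x y).1 hy))

lemma dirichletEnergy_eq_sum {f : V → ℝ} {T : Finset V} (hf : Function.support f ⊆ T) :
    dirichletEnergy Γ σ f =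
      ∑ x ∈ T ∪ T.biUnion (Γ.neighborFinset ·),
        ∑ y ∈ Γ.neighborFinset x, (f y - f x) ^ 2 * σ x y := by
  refine finsum_eq_sum_of_support_subset _ fun x hx ↦ ?_
  by_contra hxT
  simp only [coe_union, coe_biUnion, Set.mem_union, mem_coe, Set.mem_iUnion, exists_prop,
    not_or, not_exists, not_and] at hxT
  have hzero : ∀ z, z ∉ T → f z = 0 := fun z hz ↦ Function.notMem_support.1 fun h ↦ hz (hf h)
  refine hx (sum_eq_zero fun y hy ↦ ?_)
  rw [hzero x hxT.1, hzero y fun hyT ↦ hxT.2 y hyT ((Γ.mem_neighborFinset y x).2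
    ((Γ.mem_neighborFinset x y).1 hy).symm)]
  ring

lemma support_dyadicSlice_abs_subset (f : V → ℝ) (k : ℤ) :
    Function.support (fun x ↦ dyadicSlice k |f x|) ⊆ Function.support f := fun x hx hfx ↦
  hx (by simp only [hfx, abs_zero, dyadicSlice_zero])

lemma ofReal_dirichletEnergy_eq_sum (hσ : ∀ x y, Γ.Adj x y → 0 ≤ σ x y) {f : V → ℝ}
    {T : Finset V} (hf : Function.support f ⊆ T) :
    ENNReal.ofReal (dirichletEnergy Γ σ f) = ∑ x ∈ T ∪ T.biUnion (Γ.neighborFinset ·),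
      ∑ y ∈ Γ.neighborFinset x, ENNReal.ofReal ((f y - f x) ^ 2) * ENNReal.ofReal (σ x y) := by
  have hterm : ∀ x, ∀ y ∈ Γ.neighborFinset x, 0 ≤ (f y - f x) ^ 2 * σ x y := fun x y hy ↦
    mul_nonneg (sq_nonneg _) (hσ x y ((Γ.mem_neighborFinset x y).1 hy))
  rw [dirichletEnergy_eq_sum hf, ENNReal.ofReal_sum_of_nonneg fun x _ ↦ sum_nonneg (hterm x)]
  refine sum_congr rfl fun x _ ↦ ?_
  rw [ENNReal.ofReal_sum_of_nonneg (hterm x)]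
  exact sum_congr rfl fun y _ ↦ ENNReal.ofReal_mul (sq_nonneg _)

/-- Edge by edge: `t ↦ (dyadicSlice k t)ₖ` is `1`-Lipschitz into `ℓ²`,
and `||a| - |b|| ≤ |a - b|`. -/
lemma tsum_dirichletEnergy_dyadicSlice_le (hσ : ∀ x y, Γ.Adj x y → 0 ≤ σ x y) {f : V → ℝ}
    {T : Finset V} (hf : Function.support f ⊆ T) :
    ∑' k, ENNReal.ofReal (dirichletEnergy Γ σ fun x ↦ dyadicSlice k |f x|) ≤
      ENNReal.ofReal (dirichletEnergy Γ σ f) := by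
  simp only [ofReal_dirichletEnergy_eq_sum hσ ((support_dyadicSlice_abs_subset f _).trans hf),
    ofReal_dirichletEnergy_eq_sum hσ hf]
  rw [Summable.tsum_finsetSum fun _ _ ↦ ENNReal.summable]
  refine sum_le_sum fun x _ ↦ ?_
  rw [Summable.tsum_finsetSum fun _ _ ↦ ENNReal.summable]
  refine sum_le_sum fun y _ ↦ ?_
  rw [ENNReal.tsum_mul_right]
  gcongr
  calc ∑' k, ENNReal.ofReal ((dyadicSlice k |f y| - dyadicSlice k |f x|) ^ 2)
      ≤ ENNReal.ofReal ((|f y| - |f x|) ^ 2) := tsum_ofReal_sq_dyadicSlice_sub_le _ _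
    _ ≤ ENNReal.ofReal ((f y - f x) ^ 2) :=
        ENNReal.ofReal_le_ofReal (sq_le_sq.2 (by simpa using abs_abs_sub_abs_le_abs_sub _ _))

lemma NashInequality.dyadicMass_rpow_le {μ : V → ℝ} {n B : ℝ} (hN : NashInequality Γ σ μ n B)
    (hσ : ∀ x y, Γ.Adj x y → 0 ≤ σ x y) (hμ : ∀ x, 0 ≤ μ x) (hB : 0 ≤ B) (hn : 0 < n)
    {f : V → ℝ} {T : Finset V} (hf : Function.support f ⊆ T) (k : ℤ) :
    (((2 : ℝ) ^ k) ^ 2 * dyadicMass μ (|f ·|) T (k + 1)) ^ (1 + 2 / n) ≤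
      B * dirichletEnergy Γ σ (fun x ↦ dyadicSlice k |f x|) *
        (2 ^ k * dyadicMass μ (|f ·|) T k) ^ (4 / n) := by
  set h : V → ℝ := fun x ↦ dyadicSlice k |f x|
  have hhT : Function.support h ⊆ T := (support_dyadicSlice_abs_subset f k).trans hf
  have habs : ∀ x, |h x| = h x := fun x ↦ abs_of_nonneg (dyadicSlice_nonneg _ _)
  have hL2 : ∑ᶠ x, |h x| ^ (2 : ℝ) * μ x = ∑ x ∈ T, h x ^ 2 * μ x := by
    simp only [habs, Real.rpow_two]
    exact finsum_eq_sum_of_support_subset _ fun x hx ↦ hhT fun hx₀ ↦ hx (by simp [hx₀])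
  have hL1 : ∑ᶠ x, |h x| * μ x = ∑ x ∈ T, h x * μ x := by
    simp only [habs]
    exact finsum_eq_sum_of_support_subset _ fun x hx ↦ hhT fun hx₀ ↦ hx (by simp [hx₀])
  have hnash := hN h (T.finite_toSet.subset hhT)
  rw [hL2, hL1] at hnash
  calc (((2 : ℝ) ^ k) ^ 2 * dyadicMass μ (|f ·|) T (k + 1)) ^ (1 + 2 / n)
      ≤ (∑ x ∈ T, h x ^ 2 * μ x) ^ (1 + 2 / n) := by
        gcongr
        · exact mul_nonneg (by positivity) (dyadicMass_nonneg hμ _)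
        · exact sq_mul_dyadicMass_succ_le hμ k
    _ ≤ B * dirichletEnergy Γ σ h * (∑ x ∈ T, h x * μ x) ^ (4 / n) := hnash
    _ ≤ B * dirichletEnergy Γ σ h * (2 ^ k * dyadicMass μ (|f ·|) T k) ^ (4 / n) := by
        have := dirichletEnergy_nonneg hσ h
        gcongr
        · exact sum_nonneg fun x _ ↦ mul_nonneg (dyadicSlice_nonneg _ _) (hμ x)
        · exact sum_dyadicSlice_mul_le hμ k

lemma NashInequality.rpow_tsum_dyadicMass_le {μ : V → ℝ} {n p B : ℝ}
    (hN : NashInequality Γ σ μ n B) (hσ : ∀ x y, Γ.Adj x y → 0 ≤ σ x y) (hμ : ∀ x, 0 ≤ μ x)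
    (hB : 0 ≤ B) (hn : 2 < n) (hp : p = 2 * n / (n - 2)) {f : V → ℝ} {T : Finset V}
    (hf : Function.support f ⊆ T)
    (hS : ∑' k : ℤ, ENNReal.ofReal (((2 : ℝ) ^ p) ^ k * dyadicMass μ (|f ·|) T k) ≠ ⊤) :
    (∑' k : ℤ, ENNReal.ofReal (((2 : ℝ) ^ p) ^ k * dyadicMass μ (|f ·|) T k)) ^ (2 / p) ≤
      ENNReal.ofReal (2 ^ (2 * (p - 1)) * (B * dirichletEnergy Γ σ f)) := by
  refine (tsum_rpow_le_of_dyadic_nash hn hp (E := fun k ↦ B * dirichletEnergy Γ σ _)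
    (fun k ↦ dyadicMass_nonneg hμ k) (fun k ↦ mul_nonneg hB (dirichletEnergy_nonneg hσ _))
    (hN.dyadicMass_rpow_le hσ hμ hB (by linarith) hf) hS).trans ?_
  rw [ENNReal.ofReal_mul (by positivity)]
  simp only [ENNReal.ofReal_mul hB, ENNReal.tsum_mul_left]
  gcongr
  exact tsum_dirichletEnergy_dyadicSlice_le hσ hf

end Graph

theorem stmt11_general {V : Type*} (Γ : SimpleGraph V) [∀ v, Fintype (Γ.neighborSet v)]
    (σ : V → V → ℝ)
    (hpos : ∀ x y, Γ.Adj x y → 0 < σ x y)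
    (μ : V → ℝ) (hμ : ∀ x, μ x = ∑ y ∈ Γ.neighborFinset x, σ x y)
    (n p B : ℝ) (hn : 2 < n) (hp : p = 2 * n / (n - 2)) (hB : 0 < B)
    (hNash : ∀ f : V → ℝ, (Function.support f).Finite →
      (∑ᶠ x, |f x| ^ (2 : ℝ) * μ x) ^ (1 + 2 / n)
        ≤ B * (∑ᶠ x, ∑ y ∈ Γ.neighborFinset x, (f y - f x) ^ 2 * σ x y) *
            (∑ᶠ x, |f x| * μ x) ^ (4 / n)) :
    ∀ f : V → ℝ, (Function.support f).Finite →
      (∑ᶠ x, |f x| ^ p * μ x) ^ (2 / p)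
        ≤ ((2 : ℝ) ^ p - 1) ^ (2 / p) * (2 : ℝ) ^ (2 * (p - 1)) * B *
            ∑ᶠ x, ∑ y ∈ Γ.neighborFinset x, (f y - f x) ^ 2 * σ x y := by
  intro f hf
  have hσ : ∀ x y, Γ.Adj x y → 0 ≤ σ x y := fun x y hxy ↦ (hpos x y hxy).le
  have hμ₀ : ∀ x, 0 ≤ μ x := fun x ↦
    hμ x ▸ sum_nonneg fun y hy ↦ hσ x y ((Γ.mem_neighborFinset x y).1 hy)
  have hp₀ : 0 < p := hp ▸ div_pos (by linarith) (by linarith)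
  set T := hf.toFinset
  have hfT : Function.support f ⊆ T := by simp [T]
  have hgT : ∀ x ∈ T, 0 < |f x| := by simp [T]
  rw [finsum_eq_sum_of_support_subset _ fun x hx ↦ hfT fun hx₀ ↦ hx (by simp [hx₀, hp₀.ne'])]
  refine (rpow_le_rpow_mul_of_ofReal_le_mul (sum_nonneg fun x _ ↦ by positivity [hμ₀ x])
    (sub_nonneg.2 (one_lt_two_rpow hp₀).le) (by positivity)
    (mul_nonneg (by positivity) (mul_nonneg hB.le (dirichletEnergy_nonneg hσ f)))
    (ofReal_sum_rpow_mul_le_tsum hp₀ hμ₀ hgT)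
    (NashInequality.rpow_tsum_dyadicMass_le hNash hσ hμ₀ hB.le hn hp hfT
      (tsum_zpow_mul_dyadicMass_ne_top hp₀ hμ₀ hgT))).trans_eq ?_
  rw [dirichletEnergy]
  ring

theorem stmt11 {V : Type*} (Γ : SimpleGraph V) [∀ v, Fintype (Γ.neighborSet v)]
    (σ : V → V → ℝ)
    (hsymm : ∀ x y, σ x y = σ y x)
    (hpos : ∀ x y, Γ.Adj x y → 0 < σ x y)
    (μ : V → ℝ) (hμ : ∀ x, μ x = ∑ y ∈ Γ.neighborFinset x, σ x y)
    (n p B : ℝ) (hn : 2 < n) (hp : p = 2 * n / (n - 2)) (hB : 0 < B)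
    (hNash : ∀ f : V → ℝ, (Function.support f).Finite →
      (∑ᶠ x, |f x| ^ (2 : ℝ) * μ x) ^ (1 + 2 / n)
        ≤ B * (∑ᶠ x, ∑ y ∈ Γ.neighborFinset x, (f y - f x) ^ 2 * σ x y) *
            (∑ᶠ x, |f x| * μ x) ^ (4 / n)) :
    ∀ f : V → ℝ, (Function.support f).Finite →
      (∑ᶠ x, |f x| ^ p * μ x) ^ (2 / p)
        ≤ ((2 : ℝ) ^ p - 1) ^ (2 / p) * (2 : ℝ) ^ (2 * (p - 1)) * B *
            ∑ᶠ x, ∑ y ∈ Γ.neighborFinset x, (f y - f x) ^ 2 * σ x y :=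
  stmt11_general Γ σ hpos μ hμ n p B hn hp hB hNash
end

section
/- Summing the energies of all band truncations bounds the total energy: with f_k(x) = min(max(|f(x)| − 2^k, 0), 2^k) for k ∈ ℤ, one has Σ_{k∈ℤ} Σ_{x∼y} |f_k(y) − f_k(x)|² σ_{xy} ≤ Σ_{x∼y} |f(y) − f(x)|² σ_{xy} for any finitely supported f : V → ℝ. -/
/-!
The band truncation is `f_k = min |f| (2^(k+1)) - min |f| (2^k)`, so across an edge the increments
`f_k y - f_k x` all have the sign of `|f y| - |f x|` and telescope in `k`: their sum has absolute
value at most `||f y| - |f x|| ≤ |f y - f x|`. A sum of squares of numbers of one sign is at most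
the square of their sum, so summing over `k` edge by edge gives the inequality.
-/

open Finset

noncomputable def bandTrunc (k : ℤ) (t : ℝ) : ℝ := min (max (t - 2 ^ k) 0) (2 ^ k)

theorem Finset.exists_subset_Ico_neg_self_int (s : Finset ℤ) :
    ∃ N : ℕ, s ⊆ Ico (-N : ℤ) N := by
  obtain ⟨N, hN⟩ := (s.image Int.natAbs).bddAbove
  refine ⟨N + 1, fun k hk => ?_⟩
  have hk : k.natAbs ≤ N := hN (mem_image_of_mem _ hk)
  rw [mem_Ico]
  omega

theorem bandTrunc_eq_min_sub_min (k : ℤ) (t : ℝ) :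
    bandTrunc k t = min t (2 ^ (k + 1)) - min t (2 ^ k) := by
  have h2k : (0 : ℝ) < 2 ^ k := by positivity
  rw [bandTrunc, zpow_add_one₀ two_ne_zero]
  simp only [min_def, max_def]
  split_ifs <;> linarith

theorem bandTrunc_monotone (k : ℤ) : Monotone (bandTrunc k) :=
  fun _ _ h => min_le_min_right _ (max_le_max_right _ (sub_le_sub_right h _))

theorem sum_bandTrunc_sub_le {a b : ℝ} (hab : a ≤ b) (s : Finset ℤ) :
    ∑ k ∈ s, (bandTrunc k b - bandTrunc k a) ≤ b - a := by
  set G : ℤ → ℝ := fun n => min b (2 ^ n) - min a (2 ^ n)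
  have hG_nonneg : ∀ n, 0 ≤ G n := fun n => sub_nonneg.2 (min_le_min_right _ hab)
  have hG_le : ∀ n, G n ≤ b - a := fun n => by
    simp only [G, min_def]
    split_ifs <;> linarith
  have hΔ : ∀ k, bandTrunc k b - bandTrunc k a = G (k + 1) - G k := fun k => by
    simp only [G, bandTrunc_eq_min_sub_min]
    ring
  obtain ⟨N, hs⟩ := s.exists_subset_Ico_neg_self_int
  calc ∑ k ∈ s, (bandTrunc k b - bandTrunc k a)
      ≤ ∑ k ∈ Ico (-N : ℤ) N, (bandTrunc k b - bandTrunc k a) :=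
        sum_le_sum_of_subset_of_nonneg hs fun k _ _ => sub_nonneg.2 (bandTrunc_monotone k hab)
    _ = G N - G (-N) := by
        rw [← neg_sub, ← sum_Ico_int_sub N G]
        simp only [hΔ, ← sum_neg_distrib, neg_sub]
    _ ≤ b - a := by linarith [hG_nonneg (-N), hG_le N]

theorem sum_sq_bandTrunc_sub_le_of_le {a b : ℝ} (hab : a ≤ b) (s : Finset ℤ) :
    ∑ k ∈ s, (bandTrunc k b - bandTrunc k a) ^ 2 ≤ (b - a) ^ 2 :=
  (sum_sq_le_sq_sum_of_nonneg fun k _ => sub_nonneg.2 (bandTrunc_monotone k hab)).trans <|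
    pow_le_pow_left₀ (sum_nonneg fun k _ => sub_nonneg.2 (bandTrunc_monotone k hab))
      (sum_bandTrunc_sub_le hab s) 2

theorem sum_sq_bandTrunc_sub_le (a b : ℝ) (s : Finset ℤ) :
    ∑ k ∈ s, (bandTrunc k b - bandTrunc k a) ^ 2 ≤ (b - a) ^ 2 := by
  rcases le_total a b with hab | hba
  · exact sum_sq_bandTrunc_sub_le_of_le hab s
  · calc ∑ k ∈ s, (bandTrunc k b - bandTrunc k a) ^ 2
        = ∑ k ∈ s, (bandTrunc k a - bandTrunc k b) ^ 2 := sum_congr rfl fun k _ => by ring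
      _ ≤ (a - b) ^ 2 := sum_sq_bandTrunc_sub_le_of_le hba s
      _ = (b - a) ^ 2 := by ring

theorem tsum_ofReal_sq_bandTrunc_abs_sub_mul_le (u v : ℝ) {c : ℝ} (hc : 0 ≤ c) :
    ∑' k : ℤ, ENNReal.ofReal ((bandTrunc k |v| - bandTrunc k |u|) ^ 2 * c)
      ≤ ENNReal.ofReal ((v - u) ^ 2 * c) := by
  rw [ENNReal.tsum_eq_iSup_sum]
  refine iSup_le fun s => ?_
  rw [← ENNReal.ofReal_sum_of_nonneg fun k _ => by positivity, ← sum_mul]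
  refine ENNReal.ofReal_le_ofReal (mul_le_mul_of_nonneg_right ?_ hc)
  calc ∑ k ∈ s, (bandTrunc k |v| - bandTrunc k |u|) ^ 2 ≤ (|v| - |u|) ^ 2 :=
        sum_sq_bandTrunc_sub_le _ _ s
    _ ≤ (v - u) ^ 2 := sq_le_sq.2 (abs_abs_sub_abs_le_abs_sub v u)

theorem stmt15_general {V : Type*} (Γ : SimpleGraph V) [∀ v, Fintype (Γ.neighborSet v)]
    (σ : V → V → ℝ)
    (hpos : ∀ x y, Γ.Adj x y → 0 < σ x y)
    (f : V → ℝ)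
    (fk : ℤ → V → ℝ)
    (hfk : ∀ k x, fk k x = min (max (|f x| - (2 : ℝ) ^ k) 0) ((2 : ℝ) ^ k)) :
    ∑' k : ℤ, ∑' x : V, ∑ y ∈ Γ.neighborFinset x,
        ENNReal.ofReal ((fk k y - fk k x) ^ 2 * σ x y)
      ≤ ∑' x : V, ∑ y ∈ Γ.neighborFinset x, ENNReal.ofReal ((f y - f x) ^ 2 * σ x y) := by
  obtain rfl : fk = fun k x => bandTrunc k |f x| := funext fun k => funext (hfk k)
  rw [ENNReal.tsum_comm]
  refine ENNReal.tsum_le_tsum fun x => ?_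
  rw [Summable.tsum_finsetSum fun _ _ => ENNReal.summable]
  exact sum_le_sum fun y hy => tsum_ofReal_sq_bandTrunc_abs_sub_mul_le (f x) (f y)
    (hpos x y ((Γ.mem_neighborFinset x y).1 hy)).le

theorem stmt15 {V : Type*} (Γ : SimpleGraph V) [∀ v, Fintype (Γ.neighborSet v)]
    (σ : V → V → ℝ)
    (hsymm : ∀ x y, σ x y = σ y x)
    (hpos : ∀ x y, Γ.Adj x y → 0 < σ x y)
    (f : V → ℝ) (hf : (Function.support f).Finite)
    (fk : ℤ → V → ℝ)
    (hfk : ∀ k x, fk k x = min (max (|f x| - (2 : ℝ) ^ k) 0) ((2 : ℝ) ^ k)) :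
    ∑' k : ℤ, ∑' x : V, ∑ y ∈ Γ.neighborFinset x,
        ENNReal.ofReal ((fk k y - fk k x) ^ 2 * σ x y)
      ≤ ∑' x : V, ∑ y ∈ Γ.neighborFinset x, ENNReal.ofReal ((f y - f x) ^ 2 * σ x y) :=
  stmt15_general Γ σ hpos f fk hfk
end

section
/- Discrete bootstrap lemma: let (a_k)_{k∈ℤ} and (b_k)_{k∈ℤ} be nonnegative real sequences with Σ_k a_k < ∞ and Σ_k b_k < ∞, let n > 2, and suppose a_{k+1} ≤ C · b_k^{n/(n+2)} · a_k^{4/(n+2)} for all k ∈ ℤ, where C > 0. Then Σ_{k∈ℤ} a_k ≤ C^{(n+2)/(n−2)} · (Σ_{k∈ℤ} b_k)^{n/(n−2)}. -/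
/-!
Summing the recursion and shifting the index, `A = ∑ a_{k+1} ≤ C ∑ b_k^θ (a_k²)^(1-θ)` with
`θ = n/(n+2)`. Hölder with exponents `1/θ = (n+2)/n` and `1/(1-θ) = (n+2)/2` bounds this by
`C B^θ (∑ a_k²)^(1-θ) ≤ C B^θ A^(4/(n+2))`. Since `4/(n+2) < 1` exactly when `n > 2`, the power of
`A` can be absorbed into the left-hand side.
-/

namespace Real

theorem summable_and_tsum_rpow_mul_rpow_le {ι : Type*} {x y : ι → ℝ} {θ : ℝ}
    (hθ₀ : 0 < θ) (hθ₁ : θ < 1) (hx : ∀ i, 0 ≤ x i) (hy : ∀ i, 0 ≤ y i)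
    (hxs : Summable x) (hys : Summable y) :
    (Summable fun i ↦ x i ^ θ * y i ^ (1 - θ)) ∧
      ∑' i, x i ^ θ * y i ^ (1 - θ) ≤ (∑' i, x i) ^ θ * (∑' i, y i) ^ (1 - θ) := by
  have hθ : θ ≠ 0 := hθ₀.ne'
  have hθ' : 1 - θ ≠ 0 := (sub_pos.mpr hθ₁).ne'
  have := summable_and_inner_le_Lp_mul_Lq_tsum_of_nonneg
    (HolderConjugate.inv_one_sub_inv hθ₀ hθ₁)
    (fun i ↦ rpow_nonneg (hx i) θ) (fun i ↦ rpow_nonneg (hy i) (1 - θ))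
    (by simpa only [rpow_rpow_inv (hx _) hθ] using hxs)
    (by simpa only [rpow_rpow_inv (hy _) hθ'] using hys)
  simpa only [rpow_rpow_inv (hx _) hθ, rpow_rpow_inv (hy _) hθ', one_div, inv_inv] using this

theorem le_rpow_of_le_mul_rpow {A K θ : ℝ} (hA : 0 ≤ A) (hK : 0 ≤ K) (hθ : θ < 1)
    (h : A ≤ K * A ^ θ) : A ≤ K ^ (1 - θ)⁻¹ := by
  rcases hA.eq_or_lt with rfl | hA
  · positivity
  have hθ' : 1 - θ ≠ 0 := (sub_pos.mpr hθ).ne'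
  have hpow : A ^ (1 - θ) ≤ K := by
    refine le_of_mul_le_mul_right ?_ (rpow_pos_of_pos hA θ)
    rwa [← rpow_add hA, sub_add_cancel, rpow_one]
  calc A = (A ^ (1 - θ)) ^ (1 - θ)⁻¹ := (rpow_rpow_inv hA.le hθ').symm
    _ ≤ K ^ (1 - θ)⁻¹ := by gcongr

end Real

theorem summable_sq_and_tsum_sq_le_sq_tsum {ι : Type*} {a : ι → ℝ} (ha : ∀ i, 0 ≤ a i)
    (hs : Summable a) :
    (Summable fun i ↦ a i ^ 2) ∧ ∑' i, a i ^ 2 ≤ (∑' i, a i) ^ 2 := by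
  have hle : ∀ i, a i ^ 2 ≤ (∑' j, a j) * a i := fun i ↦ by
    rw [sq]; exact mul_le_mul_of_nonneg_right (hs.le_tsum i fun j _ ↦ ha j) (ha i)
  have hs2 : Summable fun i ↦ a i ^ 2 := hs.mul_left _ |>.of_nonneg_of_le (fun i ↦ sq_nonneg _) hle
  refine ⟨hs2, ?_⟩
  calc ∑' i, a i ^ 2 ≤ ∑' i, (∑' j, a j) * a i := hs2.tsum_le_tsum hle (hs.mul_left _)
    _ = (∑' i, a i) ^ 2 := by rw [tsum_mul_left, sq]

theorem tsum_le_mul_rpow_mul_rpow_of_succ_le {a b : ℤ → ℝ} {C θ : ℝ} (hC : 0 ≤ C)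
    (hθ₀ : 0 < θ) (hθ₁ : θ < 1) (ha : ∀ k, 0 ≤ a k) (hb : ∀ k, 0 ≤ b k)
    (hsa : Summable a) (hsb : Summable b)
    (hrec : ∀ k, a (k + 1) ≤ C * b k ^ θ * a k ^ (2 * (1 - θ))) :
    ∑' k, a k ≤ C * (∑' k, b k) ^ θ * (∑' k, a k) ^ (2 * (1 - θ)) := by
  have hsq : ∀ x : ℝ, 0 ≤ x → (x ^ 2) ^ (1 - θ) = x ^ (2 * (1 - θ)) := fun x hx ↦ by
    exact_mod_cast (Real.rpow_natCast_mul hx 2 (1 - θ)).symm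
  obtain ⟨hsa2, hA2⟩ := summable_sq_and_tsum_sq_le_sq_tsum ha hsa
  obtain ⟨hsum, hHolder⟩ := Real.summable_and_tsum_rpow_mul_rpow_le hθ₀ hθ₁ hb
    (fun k ↦ sq_nonneg (a k)) hsb hsa2
  calc ∑' k, a k = ∑' k, a (k + 1) := ((Equiv.addRight 1).tsum_eq a).symm
    _ ≤ ∑' k, C * (b k ^ θ * (a k ^ 2) ^ (1 - θ)) :=
      ((Equiv.addRight 1).summable_iff.mpr hsa).tsum_le_tsum
        (fun k ↦ by rw [hsq _ (ha k), ← mul_assoc]; exact hrec k) (hsum.mul_left C)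
    _ ≤ C * ((∑' k, b k) ^ θ * ((∑' k, a k) ^ 2) ^ (1 - θ)) := by
      rw [tsum_mul_left]
      have hB₀ : 0 ≤ ∑' k, b k := tsum_nonneg hb
      gcongr
      exact hHolder.trans (by gcongr)
    _ = C * (∑' k, b k) ^ θ * (∑' k, a k) ^ (2 * (1 - θ)) := by
      rw [hsq _ (tsum_nonneg ha), mul_assoc]

theorem stmt17 (a b : ℤ → ℝ) (ha0 : ∀ k, 0 ≤ a k) (hb0 : ∀ k, 0 ≤ b k)
    (hsa : Summable a) (hsb : Summable b)
    (n C : ℝ) (hn : 2 < n) (hC : 0 < C)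
    (hrec : ∀ k : ℤ, a (k + 1) ≤ C * b k ^ (n / (n + 2)) * a k ^ (4 / (n + 2))) :
    ∑' k : ℤ, a k ≤ C ^ ((n + 2) / (n - 2)) * (∑' k : ℤ, b k) ^ (n / (n - 2)) := by
  have hn₀ : 0 < n + 2 := by linarith
  have hθ₁ : n / (n + 2) < 1 := (div_lt_one hn₀).mpr (by linarith)
  have hexp : 2 * (1 - n / (n + 2)) = 4 / (n + 2) := by field_simp; ring
  have hA := tsum_le_mul_rpow_mul_rpow_of_succ_le hC.le (by positivity) hθ₁ ha0 hb0 hsa hsb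
    (by rwa [hexp])
  rw [hexp] at hA
  have hB₀ : 0 ≤ ∑' k, b k := tsum_nonneg hb0
  calc ∑' k, a k ≤ (C * (∑' k, b k) ^ (n / (n + 2))) ^ (1 - 4 / (n + 2))⁻¹ :=
        Real.le_rpow_of_le_mul_rpow (tsum_nonneg ha0) (by positivity)
          ((div_lt_one hn₀).mpr (by linarith)) hA
    _ = C ^ ((n + 2) / (n - 2)) * (∑' k, b k) ^ (n / (n - 2)) := by
      rw [Real.mul_rpow hC.le (by positivity), ← Real.rpow_mul hB₀]
      congr 2 <;> field_simp <;> ring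
end
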